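/- arXiv:1711.01596 — 5 statements merged into one kernel-verified Lean document; each statement's English description precedes it below -/
import Mathlib

section
/- Let B = [Aᵀ, wC]ᵀ be the (n+k)×d vertical concatenation of A and w·Cᵀ (with C ∈ ℝ^{d×k}). Then the distance to the best rank-2k approximation of B·Bᵀ in Frobenius norm is at most ‖A·Aᵀ‖_F: that is, ‖BBᵀ − (BBᵀ)_{2k}‖_F ≤ ‖AAᵀ‖_F. -/
open Matrix BigOperators

noncomputable def frob {m n : Type*} [Fintype m] [Fintype n] (M : Matrix m n ℝ) : ℝ :=
  Real.sqrt (∑ i, ∑ j, (M i j) ^ 2)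

def IsBestRank {ι : Type*} [Fintype ι] [DecidableEq ι] (r : ℕ) (M Mr : Matrix ι ι ℝ) : Prop :=
  Mr.rank ≤ r ∧ ∀ L : Matrix ι ι ℝ, L.rank ≤ r → frob (M - Mr) ≤ frob (M - L)

/-!
Splitting `B Bᵀ` into blocks along the rows of `A` and of `w Cᵀ`, only the top-left block
`A Aᵀ` involves more than `k` rows or columns. Replacing that block by `0` gives a matrix of
rank at most `2k`, which is therefore a competitor for the best rank-`2k` approximation, and its
distance to `B Bᵀ` is exactly `‖A Aᵀ‖_F`.
-/

namespace Matrix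

theorem rank_fromBlocks_zero₁₁_le {l m n o R : Type*} [Fintype l] [Fintype m] [Fintype o]
    [DecidableEq m] [DecidableEq o] [CommRing R] [StrongRankCondition R]
    (Q : Matrix n m R) (P : Matrix o l R) (S : Matrix o m R) :
    (fromBlocks 0 Q P S).rank ≤ Fintype.card m + Fintype.card o := by
  have hfactor : fromBlocks 0 Q P S =
      fromBlocks Q 0 S (1 : Matrix o o R) * fromBlocks (0 : Matrix m l R) 1 P 0 := by
    rw [fromBlocks_multiply]
    simp
  calc (fromBlocks 0 Q P S).rank ≤ (fromBlocks Q 0 S (1 : Matrix o o R)).rank :=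
        hfactor ▸ rank_mul_le_left _ _
    _ ≤ Fintype.card (m ⊕ o) := rank_le_card_width _
    _ = Fintype.card m + Fintype.card o := Fintype.card_sum

end Matrix

theorem frob_fromBlocks_zero {l m n o : Type*} [Fintype l] [Fintype m] [Fintype n] [Fintype o]
    (P : Matrix n l ℝ) :
    frob (fromBlocks P (0 : Matrix n m ℝ) (0 : Matrix o l ℝ) 0) = frob P := by
  simp [frob, Fintype.sum_sum_type]

theorem IsBestRank.frob_sub_le_of_fromBlocks {n o : Type*} [Fintype n] [Fintype o]
    [DecidableEq n] [DecidableEq o] {r : ℕ} {P : Matrix n n ℝ} {Q : Matrix n o ℝ}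
    {R : Matrix o n ℝ} {S : Matrix o o ℝ} {K : Matrix (n ⊕ o) (n ⊕ o) ℝ}
    (hK : IsBestRank r (fromBlocks P Q R S) K) (hr : 2 * Fintype.card o ≤ r) :
    frob (fromBlocks P Q R S - K) ≤ frob P := by
  have hrank : (fromBlocks 0 Q R S).rank ≤ r :=
    (rank_fromBlocks_zero₁₁_le Q R S).trans (by omega)
  calc frob (fromBlocks P Q R S - K) ≤ frob (fromBlocks P Q R S - fromBlocks 0 Q R S) :=
        hK.2 _ hrank
    _ = frob (fromBlocks P 0 0 0) := by
        congr 1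
        ext (i | i) (j | j) <;> simp
    _ = frob P := frob_fromBlocks_zero P

theorem stmt1 (n d k : ℕ) (A : Matrix (Fin n) (Fin d) ℝ) (C : Matrix (Fin d) (Fin k) ℝ)
    (w : ℝ) (B : Matrix (Fin n ⊕ Fin k) (Fin d) ℝ)
    (hB : B = Matrix.fromRows A (w • Cᵀ))
    (K2k : Matrix (Fin n ⊕ Fin k) (Fin n ⊕ Fin k) ℝ)
    (hK2k : IsBestRank (2 * k) (B * Bᵀ) K2k) :
    frob (B * Bᵀ - K2k) ≤ frob (A * Aᵀ) := by
  have hBBt : B * Bᵀ = fromBlocks (A * Aᵀ) (A * (w • Cᵀ)ᵀ) (w • Cᵀ * Aᵀ)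
      (w • Cᵀ * (w • Cᵀ)ᵀ) := by
    rw [hB, transpose_fromRows, fromRows_mul_fromCols]
  rw [hBBt] at hK2k ⊢
  exact hK2k.frob_sub_le_of_fromBlocks (by simp)
end

section
/- Suppose N ∈ ℝ^{m×k} satisfies ‖K − NNᵀ‖_F² ≤ Δ₁·‖K − K_r‖_F² and ‖K − K_r‖_F ≤ n·β for some β with √Δ₁·n·β ≤ w/3. If a submatrix of K has all entries equal to integer multiples of w plus a known offset matrix O, then rounding the corresponding entries of NNᵀ − O to the nearest multiple of w exactly recovers that submatrix of K − O. -/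
open Matrix BigOperators

/-!
The error `K - N Nᵀ` has Frobenius norm at most `√Δ₁ · ‖K - K_r‖_F ≤ √Δ₁ · n β ≤ w / 3`, hence every
entry of `N Nᵀ - O` lies within `w / 3 < w / 2` of the multiple of `w` that `K - O` is on `S`,
and rounding to the nearest multiple of `w` returns that multiple.
-/

section Frobenius

variable {m n : Type*} [Fintype m] [Fintype n]

lemma frob_nonneg (M : Matrix m n ℝ) : 0 ≤ frob M :=
  Real.sqrt_nonneg _

lemma abs_apply_le_frob (M : Matrix m n ℝ) (i : m) (j : n) : |M i j| ≤ frob M := by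
  have hrow : (M i j) ^ 2 ≤ ∑ j', (M i j') ^ 2 :=
    Finset.single_le_sum (fun j' _ => sq_nonneg (M i j')) (Finset.mem_univ j)
  have hall : ∑ j', (M i j') ^ 2 ≤ ∑ i', ∑ j', (M i' j') ^ 2 :=
    Finset.single_le_sum (f := fun i' => ∑ j', (M i' j') ^ 2)
      (fun i' _ => Finset.sum_nonneg fun j' _ => sq_nonneg (M i' j')) (Finset.mem_univ i)
  rw [← Real.sqrt_sq_eq_abs]
  exact Real.sqrt_le_sqrt (hrow.trans hall)

lemma frob_le_sqrt_mul_of_sq_le {A B : Matrix m n ℝ} {Δ : ℝ}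
    (h : frob A ^ 2 ≤ Δ * frob B ^ 2) : frob A ≤ Real.sqrt Δ * frob B := by
  have := Real.sqrt_le_sqrt h
  rwa [Real.sqrt_sq (frob_nonneg A), Real.sqrt_mul' Δ (sq_nonneg _),
    Real.sqrt_sq (frob_nonneg B)] at this

end Frobenius

lemma round_div_eq_of_abs_sub_mul_lt {w x : ℝ} {z : ℤ} (hw : 0 < w)
    (h : |x - w * z| < w / 2) : round (x / w) = z := by
  have hdiv : |x / w - z| < 1 / 2 := by
    rw [show x / w - z = (x - w * z) / w by field_simp, abs_div, abs_of_pos hw, div_lt_iff₀ hw]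
    linarith
  rw [round_eq_iff]
  obtain ⟨hlo, hhi⟩ := abs_lt.mp hdiv
  constructor <;> linarith

theorem stmt9_general (m k n : ℕ) (K : Matrix (Fin m) (Fin m) ℝ)
    (Kr : Matrix (Fin m) (Fin m) ℝ)
    (N : Matrix (Fin m) (Fin k) ℝ) (Δ₁ β w : ℝ)
    (hw : 0 < w)
    (happrox : frob (K - N * Nᵀ) ^ 2 ≤ Δ₁ * frob (K - Kr) ^ 2)
    (herr : frob (K - Kr) ≤ n * β)
    (hsmall : Real.sqrt Δ₁ * n * β ≤ w / 3)
    (S : Set (Fin m × Fin m)) (O : Matrix (Fin m) (Fin m) ℝ)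
    (hint : ∀ p ∈ S, ∃ z : ℤ, K p.1 p.2 - O p.1 p.2 = w * z) :
    ∀ p ∈ S, w * (round (((N * Nᵀ) p.1 p.2 - O p.1 p.2) / w) : ℝ) =
      K p.1 p.2 - O p.1 p.2 := by
  rintro ⟨i, j⟩ hp
  obtain ⟨z, hz⟩ := hint (i, j) hp
  have hfrob : frob (K - N * Nᵀ) ≤ w / 3 :=
    calc frob (K - N * Nᵀ) ≤ Real.sqrt Δ₁ * frob (K - Kr) := frob_le_sqrt_mul_of_sq_le happrox
      _ ≤ Real.sqrt Δ₁ * (n * β) := mul_le_mul_of_nonneg_left herr (Real.sqrt_nonneg _)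
      _ ≤ w / 3 := by linarith
  have hentry : |((N * Nᵀ) i j - O i j) - w * z| < w / 2 := by
    have := abs_apply_le_frob (K - N * Nᵀ) i j
    rw [Matrix.sub_apply, abs_sub_comm] at this
    rw [← hz, sub_sub_sub_cancel_right]
    linarith
  rw [round_div_eq_of_abs_sub_mul_lt hw hentry, hz]

theorem stmt9 (m k r n : ℕ) (K : Matrix (Fin m) (Fin m) ℝ) (hK : K.PosSemidef)
    (Kr : Matrix (Fin m) (Fin m) ℝ) (hKr : IsBestRank r K Kr)
    (N : Matrix (Fin m) (Fin k) ℝ) (Δ₁ β w : ℝ)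
    (hΔ₁ : 1 ≤ Δ₁) (hβ : 0 < β) (hw : 0 < w)
    (happrox : frob (K - N * Nᵀ) ^ 2 ≤ Δ₁ * frob (K - Kr) ^ 2)
    (herr : frob (K - Kr) ≤ n * β)
    (hsmall : Real.sqrt Δ₁ * n * β ≤ w / 3)
    (S : Set (Fin m × Fin m)) (O : Matrix (Fin m) (Fin m) ℝ)
    (hint : ∀ p ∈ S, ∃ z : ℤ, K p.1 p.2 - O p.1 p.2 = w * z) :
    ∀ p ∈ S, w * (round (((N * Nᵀ) p.1 p.2 - O p.1 p.2) / w) : ℝ) =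
      K p.1 p.2 - O p.1 p.2 :=
  stmt9_general m k n K Kr N Δ₁ β w hw happrox herr hsmall S O hint
end

section
/- Let Φ ∈ ℝ^{n×m} and let Z̃ be a matrix such that for every orthonormal Q ∈ ℝ^{n×k}: (1−ε)‖Z̃ − QQᵀZ̃‖_F² ≤ ‖Φ − QQᵀΦ‖_F² ≤ (1+ε)‖Z̃ − QQᵀZ̃‖_F². If Q satisfies ‖Z̃ − QQᵀZ̃‖_F² ≤ (1+ε)‖Z̃ − Z̃_k‖_F², then ‖Φ − QQᵀΦ‖_F² ≤ ((1+ε)²/(1−ε))·‖Φ − Φ_k‖_F². -/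
open Matrix BigOperators

theorem stmt10 (n m s k : ℕ) (Φ : Matrix (Fin n) (Fin m) ℝ) (Ztil : Matrix (Fin n) (Fin s) ℝ)
    (ε : ℝ) (hε0 : 0 < ε) (hε1 : ε < 1)
    (hpcp : ∀ Q : Matrix (Fin n) (Fin k) ℝ, Qᵀ * Q = 1 →
      (1 - ε) * frob (Ztil - Q * Qᵀ * Ztil) ^ 2 ≤ frob (Φ - Q * Qᵀ * Φ) ^ 2 ∧
      frob (Φ - Q * Qᵀ * Φ) ^ 2 ≤ (1 + ε) * frob (Ztil - Q * Qᵀ * Ztil) ^ 2)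
    (Q : Matrix (Fin n) (Fin k) ℝ) (hQ : Qᵀ * Q = 1)
    (hopt : ∀ Q' : Matrix (Fin n) (Fin k) ℝ, Q'ᵀ * Q' = 1 →
      frob (Ztil - Q * Qᵀ * Ztil) ^ 2 ≤ (1 + ε) * frob (Ztil - Q' * Q'ᵀ * Ztil) ^ 2) :
    ∀ Q' : Matrix (Fin n) (Fin k) ℝ, Q'ᵀ * Q' = 1 →
      frob (Φ - Q * Qᵀ * Φ) ^ 2 ≤ ((1 + ε) ^ 2 / (1 - ε)) * frob (Φ - Q' * Q'ᵀ * Φ) ^ 2 := by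
  intro Q' hQ'
  have h1 := (hpcp Q hQ).2
  have h2 := hopt Q' hQ'
  have h3 := (hpcp Q' hQ').1
  have hε : 0 < 1 - ε := by linarith
  have h4 : frob (Ztil - Q' * Q'ᵀ * Ztil) ^ 2 ≤ (1 / (1 - ε)) * frob (Φ - Q' * Q'ᵀ * Φ) ^ 2 := by
    rw [div_mul_eq_mul_div, le_div_iff₀ hε]
    linarith
  calc frob (Φ - Q * Qᵀ * Φ) ^ 2 ≤ (1 + ε) * frob (Ztil - Q * Qᵀ * Ztil) ^ 2 := h1
    _ ≤ (1 + ε) * ((1 + ε) * frob (Ztil - Q' * Q'ᵀ * Ztil) ^ 2) := by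
        apply mul_le_mul_of_nonneg_left h2; linarith
    _ ≤ (1 + ε) * ((1 + ε) * ((1 / (1 - ε)) * frob (Φ - Q' * Q'ᵀ * Φ) ^ 2)) := by
        apply mul_le_mul_of_nonneg_left (mul_le_mul_of_nonneg_left h4 (by linarith)) (by linarith)
    _ = ((1 + ε) ^ 2 / (1 - ε)) * frob (Φ - Q' * Q'ᵀ * Φ) ^ 2 := by ring
end

section
/- Let K = {f(‖b_i − b_j‖²)} where f(x) = Σ c_q x^q with c₁ > 0 and |c_q/c₁| ≤ G^{q−1} (G ≥ 1), and suppose ‖b_i − b_j‖² ≤ t₀ for all i,j where G·t₀ ≤ 1/2. Then the matrix K − c₀·J − c₁·(E + Eᵀ) + 2c₁·BBᵀ has all entries bounded in absolute value by c₁·Σ_{q=2}^∞ G^{q−1}·t₀^q ≤ 2c₁·G·t₀². -/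
open Matrix BigOperators

theorem stmt13 (m d : ℕ) (b : Fin m → Fin d → ℝ) (c : ℕ → ℝ) (G t₀ : ℝ)
    (hG : 1 ≤ G) (hc1 : 0 < c 1) (ht₀ : 0 ≤ t₀) (hGt₀ : G * t₀ ≤ 1 / 2)
    (hbound : ∀ q, 2 ≤ q → |c q| ≤ c 1 * G ^ (q - 1))
    (hdist : ∀ i j, ∑ l, (b i l - b j l) ^ 2 ≤ t₀)
    (B : Matrix (Fin m) (Fin d) ℝ) (hB : B = Matrix.of fun i l => b i l)
    (J : Matrix (Fin m) (Fin m) ℝ) (hJ : J = Matrix.of fun _ _ => (1 : ℝ))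
    (E : Matrix (Fin m) (Fin m) ℝ) (hE : E = Matrix.of fun _ j => ∑ l, (b j l) ^ 2)
    (K : Matrix (Fin m) (Fin m) ℝ)
    (hK : K = Matrix.of fun i j => ∑' q : ℕ, c q * (∑ l, (b i l - b j l) ^ 2) ^ q) :
    (∀ i j, |(K - c 0 • J - c 1 • (E + Eᵀ) + (2 * c 1) • (B * Bᵀ)) i j| ≤
        c 1 * ∑' q : ℕ, G ^ (q + 1) * t₀ ^ (q + 2)) ∧
    c 1 * (∑' q : ℕ, G ^ (q + 1) * t₀ ^ (q + 2)) ≤ 2 * c 1 * G * t₀ ^ 2 := by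
  set r := G * t₀ with hr
  have hr0 : 0 ≤ r := mul_nonneg (by linarith) ht₀
  have hr1 : r < 1 := by linarith
  have hgeo : Summable (fun q : ℕ => r ^ q) := summable_geometric_of_lt_one hr0 hr1
  have hbnd_eq : ∀ q : ℕ, G ^ (q + 1) * t₀ ^ (q + 2) = (G * t₀ ^ 2) * r ^ q := by
    intro q; rw [hr, mul_pow]; ring
  have hsumb : Summable (fun q : ℕ => G ^ (q + 1) * t₀ ^ (q + 2)) := by
    refine (hgeo.mul_left (G * t₀ ^ 2)).congr fun q => ?_
    rw [hbnd_eq]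
  have htsumb : ∑' q : ℕ, G ^ (q + 1) * t₀ ^ (q + 2) = (G * t₀ ^ 2) * (1 - r)⁻¹ := by
    rw [tsum_congr hbnd_eq, tsum_mul_left, tsum_geometric_of_lt_one hr0 hr1]
  constructor
  · intro i j
    set D := ∑ l, (b i l - b j l) ^ 2 with hDdef
    have hD0 : 0 ≤ D := Finset.sum_nonneg fun l _ => sq_nonneg _
    have hDle : D ≤ t₀ := hdist i j
    have hterm : ∀ q : ℕ, |c (q + 2) * D ^ (q + 2)| ≤ c 1 * (G ^ (q + 1) * t₀ ^ (q + 2)) := by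
      intro q
      rw [abs_mul, abs_pow, abs_of_nonneg hD0]
      have h1 : |c (q + 2)| ≤ c 1 * G ^ (q + 1) := by
        have := hbound (q + 2) (by omega)
        simpa using this
      have h2 : D ^ (q + 2) ≤ t₀ ^ (q + 2) := pow_le_pow_left₀ hD0 hDle _
      calc |c (q + 2)| * D ^ (q + 2) ≤ (c 1 * G ^ (q + 1)) * t₀ ^ (q + 2) :=
            mul_le_mul h1 h2 (pow_nonneg hD0 _) (by positivity)
        _ = c 1 * (G ^ (q + 1) * t₀ ^ (q + 2)) := by ring
    have hsumshift : Summable (fun q : ℕ => c (q + 2) * D ^ (q + 2)) :=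
      Summable.of_abs (Summable.of_nonneg_of_le (fun q => abs_nonneg _) hterm
        (hsumb.mul_left (c 1)))
    have hsumfull : Summable (fun q : ℕ => c q * D ^ q) :=
      (summable_nat_add_iff 2).mp hsumshift
    have hsplit : ∑' q : ℕ, c q * D ^ q
        = c 0 + c 1 * D + ∑' q : ℕ, c (q + 2) * D ^ (q + 2) := by
      rw [Summable.tsum_eq_zero_add hsumfull, Summable.tsum_eq_zero_add ((summable_nat_add_iff 1).mpr hsumfull)]
      have h2 : (fun q : ℕ => c (q + 1 + 1) * D ^ (q + 1 + 1))
          = fun q : ℕ => c (q + 2) * D ^ (q + 2) := rfl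
      rw [h2]
      ring
    have hDexp : D = (∑ l, b i l ^ 2) + (∑ l, b j l ^ 2) - 2 * ∑ l, b i l * b j l := by
      rw [hDdef]
      rw [← Finset.sum_add_distrib, Finset.mul_sum, ← Finset.sum_sub_distrib]
      apply Finset.sum_congr rfl
      intro l _
      ring
    have hentry : (K - c 0 • J - c 1 • (E + Eᵀ) + (2 * c 1) • (B * Bᵀ)) i j
        = ∑' q : ℕ, c (q + 2) * D ^ (q + 2) := by
      simp only [hK, hJ, hE, hB, Matrix.sub_apply, Matrix.add_apply, Matrix.smul_apply,
        Matrix.mul_apply, Matrix.transpose_apply, Matrix.of_apply, smul_eq_mul]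
      rw [← hDdef, hsplit, hDexp]
      ring
    rw [hentry]
    calc |∑' q : ℕ, c (q + 2) * D ^ (q + 2)| ≤ ∑' q : ℕ, |c (q + 2) * D ^ (q + 2)| := by
          simpa only [Real.norm_eq_abs] using
            norm_tsum_le_tsum_norm (f := fun q : ℕ => c (q + 2) * D ^ (q + 2))
              (by simpa only [Real.norm_eq_abs] using hsumshift.abs)
      _ ≤ ∑' q : ℕ, c 1 * (G ^ (q + 1) * t₀ ^ (q + 2)) :=
          Summable.tsum_le_tsum hterm hsumshift.abs (hsumb.mul_left (c 1))
      _ = c 1 * ∑' q : ℕ, G ^ (q + 1) * t₀ ^ (q + 2) := tsum_mul_left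
  · rw [htsumb]
    have hinv : (1 - r)⁻¹ ≤ 2 := by
      rw [inv_le_comm₀ (by linarith) (by norm_num)]
      linarith
    have h1 : 0 ≤ G * t₀ ^ 2 := by positivity
    nlinarith [mul_le_mul_of_nonneg_left hinv (mul_nonneg hc1.le h1)]
end

section
/- Let ψ(x,y) = f(xᵀy) be a dot-product kernel with f(x) = Σ c_q x^q, c₁ > 0, |c_q/c₁| ≤ G^{q−1}, G ≥ 1. Let B have rows b_i with |b_iᵀb_j| ≤ 1/(16G) for all i,j, and let K be the kernel matrix K_{i,j} = f(b_iᵀb_j). Then the matrix K − c₀·J − c₁·BBᵀ has each entry (i,j) bounded in absolute value by (1/12)·c₁·|b_iᵀb_j|, and in particular ‖K − c₀J − c₁BBᵀ‖_F ≤ (c₁/12)·‖BBᵀ‖_F. -/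
open Matrix BigOperators

lemma tail_key (c : ℕ → ℝ) (G x : ℝ) (hG : 1 ≤ G) (hc1 : 0 < c 1)
    (hbound : ∀ q, 2 ≤ q → |c q| ≤ c 1 * G ^ (q - 1)) (hx : |x| ≤ 1 / (16 * G)) :
    |(∑' q : ℕ, c q * x ^ q) - c 0 - c 1 * x| ≤ (1 / 12) * c 1 * |x| := by
  have hG0 : (0:ℝ) < G := lt_of_lt_of_le one_pos hG
  have hGx : G * |x| ≤ 1 / 16 := by
    calc G * |x| ≤ G * (1 / (16 * G)) := by
          exact mul_le_mul_of_nonneg_left hx hG0.le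
      _ = 1 / 16 := by field_simp
  have hbd : ∀ q : ℕ, |c (q + 2) * x ^ (q + 2)| ≤ c 1 * |x| * (1/16) ^ (q + 1) := by
    intro q
    have h1 : |c (q + 2)| ≤ c 1 * G ^ (q + 1) := by
      have := hbound (q + 2) (by omega)
      simpa using this
    have : |c (q + 2) * x ^ (q + 2)| = |c (q + 2)| * |x| ^ (q + 2) := by
      rw [abs_mul, abs_pow]
    rw [this]
    calc |c (q + 2)| * |x| ^ (q + 2) ≤ (c 1 * G ^ (q + 1)) * |x| ^ (q + 2) := by
          exact mul_le_mul_of_nonneg_right h1 (pow_nonneg (abs_nonneg x) _)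
      _ = c 1 * |x| * (G * |x|) ^ (q + 1) := by ring
      _ ≤ c 1 * |x| * (1/16) ^ (q + 1) := by
          apply mul_le_mul_of_nonneg_left
          · exact pow_le_pow_left₀ (mul_nonneg hG0.le (abs_nonneg x)) hGx _
          · positivity
  have hgeo : Summable (fun q : ℕ => c 1 * |x| * (1/16 : ℝ) ^ (q + 1)) := by
    apply Summable.mul_left
    exact (summable_geometric_of_lt_one (by norm_num) (by norm_num)).comp_injective
      (add_left_injective 1)
  have hsumg : Summable (fun q : ℕ => c (q + 2) * x ^ (q + 2)) := by
    apply Summable.of_abs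
    exact hgeo.of_nonneg_of_le (fun q => abs_nonneg _) hbd
  have hsumf : Summable (fun q : ℕ => c q * x ^ q) := by
    rw [← summable_nat_add_iff 2]
    exact hsumg
  have hsplit : (∑' q : ℕ, c q * x ^ q) = c 0 + c 1 * x + ∑' q : ℕ, c (q + 2) * x ^ (q + 2) := by
    rw [Summable.tsum_eq_zero_add hsumf, Summable.tsum_eq_zero_add ((summable_nat_add_iff 1).mpr hsumf)]
    simp [pow_succ]
    ring
  rw [hsplit]
  have h1 : |c 0 + c 1 * x + (∑' q : ℕ, c (q + 2) * x ^ (q + 2)) - c 0 - c 1 * x|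
      = |∑' q : ℕ, c (q + 2) * x ^ (q + 2)| := by congr 1; ring
  rw [h1]
  have h2 : |∑' q : ℕ, c (q + 2) * x ^ (q + 2)| ≤ ∑' q : ℕ, c 1 * |x| * (1/16 : ℝ) ^ (q + 1) := by
    calc |∑' q : ℕ, c (q + 2) * x ^ (q + 2)| ≤ ∑' q : ℕ, |c (q + 2) * x ^ (q + 2)| := by
          have hn := norm_tsum_le_tsum_norm (f := fun q : ℕ => c (q + 2) * x ^ (q + 2))
            (by simp only [Real.norm_eq_abs]; exact hsumg.abs)
          simp only [Real.norm_eq_abs] at hn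
          exact hn
      _ ≤ _ := Summable.tsum_le_tsum hbd (hsumg.abs) hgeo
  have h3 : ∑' q : ℕ, c 1 * |x| * (1/16 : ℝ) ^ (q + 1) = c 1 * |x| * (1/15) := by
    have : ∀ q : ℕ, c 1 * |x| * (1/16 : ℝ) ^ (q + 1) = (c 1 * |x| * (1/16)) * (1/16 : ℝ) ^ q := by
      intro q; ring
    simp_rw [this]
    rw [tsum_mul_left, tsum_geometric_of_lt_one (by norm_num) (by norm_num)]
    ring
  calc |∑' q : ℕ, c (q + 2) * x ^ (q + 2)| ≤ c 1 * |x| * (1/15) := by rw [← h3]; exact h2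
    _ ≤ (1/12) * c 1 * |x| := by nlinarith [abs_nonneg x, hc1.le]

theorem stmt17 (m d : ℕ) (b : Fin m → Fin d → ℝ) (c : ℕ → ℝ) (G : ℝ)
    (hG : 1 ≤ G) (hc1 : 0 < c 1)
    (hbound : ∀ q, 2 ≤ q → |c q| ≤ c 1 * G ^ (q - 1))
    (B : Matrix (Fin m) (Fin d) ℝ) (hB : B = Matrix.of fun i l => b i l)
    (hdot : ∀ i j, |(B * Bᵀ) i j| ≤ 1 / (16 * G))
    (J : Matrix (Fin m) (Fin m) ℝ) (hJ : J = Matrix.of fun _ _ => (1 : ℝ))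
    (K : Matrix (Fin m) (Fin m) ℝ)
    (hK : K = Matrix.of fun i j => ∑' q : ℕ, c q * ((B * Bᵀ) i j) ^ q) :
    (∀ i j, |(K - c 0 • J - c 1 • (B * Bᵀ)) i j| ≤ (1 / 12) * c 1 * |(B * Bᵀ) i j|) ∧
    frob (K - c 0 • J - c 1 • (B * Bᵀ)) ≤ (c 1 / 12) * frob (B * Bᵀ) := by
  have hentry : ∀ i j, |(K - c 0 • J - c 1 • (B * Bᵀ)) i j| ≤ (1 / 12) * c 1 * |(B * Bᵀ) i j| := by
    intro i j
    have : (K - c 0 • J - c 1 • (B * Bᵀ)) i j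
        = (∑' q : ℕ, c q * ((B * Bᵀ) i j) ^ q) - c 0 - c 1 * ((B * Bᵀ) i j) := by
      simp [hK, hJ, Matrix.sub_apply, Matrix.smul_apply, smul_eq_mul]
    rw [this]
    exact tail_key c G _ hG hc1 hbound (hdot i j)
  refine ⟨hentry, ?_⟩
  unfold frob
  have ha : (0:ℝ) ≤ c 1 / 12 := by positivity
  have hsq : ∀ i j, ((K - c 0 • J - c 1 • (B * Bᵀ)) i j) ^ 2
      ≤ (c 1 / 12) ^ 2 * ((B * Bᵀ) i j) ^ 2 := by
    intro i j
    have h := hentry i j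
    have h' : |(K - c 0 • J - c 1 • (B * Bᵀ)) i j| ≤ (c 1 / 12) * |(B * Bᵀ) i j| := by
      linarith [h]
    calc ((K - c 0 • J - c 1 • (B * Bᵀ)) i j) ^ 2
        = |(K - c 0 • J - c 1 • (B * Bᵀ)) i j| ^ 2 := (sq_abs _).symm
      _ ≤ ((c 1 / 12) * |(B * Bᵀ) i j|) ^ 2 := by
          exact pow_le_pow_left₀ (abs_nonneg _) h' 2
      _ = (c 1 / 12) ^ 2 * ((B * Bᵀ) i j) ^ 2 := by rw [mul_pow, sq_abs]
  calc Real.sqrt (∑ i, ∑ j, ((K - c 0 • J - c 1 • (B * Bᵀ)) i j) ^ 2)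
      ≤ Real.sqrt (∑ i, ∑ j, (c 1 / 12) ^ 2 * ((B * Bᵀ) i j) ^ 2) := by
        apply Real.sqrt_le_sqrt
        apply Finset.sum_le_sum; intro i _
        apply Finset.sum_le_sum; intro j _
        exact hsq i j
    _ = (c 1 / 12) * Real.sqrt (∑ i, ∑ j, ((B * Bᵀ) i j) ^ 2) := by
        simp_rw [← Finset.mul_sum]
        rw [Real.sqrt_mul (by positivity), Real.sqrt_sq ha]
end
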